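/- arXiv:1705.00899 — 3 statements merged into one kernel-verified Lean document; each statement's English description precedes it below -/
import Mathlib

section
/- Let ζ be a primitive aperiodic substitution of constant length q and height h > 1, with one-sided fixed point U, and let η be its pure base substitution on the alphabet ℐ of length-h blocks of U with coding map φ satisfying φ ∘ η = ζ ∘ φ and φ(V) = U for the fixed point V of η. Then the spectrum of the substitution matrix S_η and the spectrum of S_ζ may differ only by 0 or roots of unity: for every θ ∈ ℂ with θ ≠ 0 and θⁿ ≠ 1 for all n ≥ 1, θ is an eigenvalue of S_ζ if and only if θ is an eigenvalue of S_η. -/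
/-!
If `u` is a left eigenvector of a substitution matrix for `θ`, the sums `P J` of `u` along the
prefixes of length `J` of a fixed point satisfy `P (q * J) = θ * P J`; and whenever such a
sequence can be written as `R ⬝ᵥ (Aᵏ *ᵥ x)` for a square matrix `A`, Cayley–Hamilton makes `θ` an
eigenvalue of `A`.

From `ζ` to `η`: since `U = φ(V)`, the `ζ`-sums at multiples of `h` are such a sequence for the
letter counts of `V`, iterated by `S_η`. If they all vanish, `P` takes finitely many values, so
`P = 0` as `θ` is not a root of unity, and `u = 0` by primitivity.

From `η` to `ζ`: the `η`-sums are read off the counts of the length-`h` windows of `U`, because a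
window equal to a block `φ c` starts at a multiple of `h` (this is where the height enters). These
counts are iterated by the substitution `ζ_h` induced on length-`h` words, and an induction on the
word length shows that the eigenvalues of `ζ_h` other than `0` and roots of unity are those of `ζ`.
-/

open MeasureTheory Filter

/-- A substitution on the alphabet `Fin m`, applied to a word by concatenation. -/
def substWord {m : ℕ} (ζ : Fin m → List (Fin m)) (w : List (Fin m)) : List (Fin m) :=
  w.flatMap ζ

/-- The substitution matrix over `ℕ`: entry `(a, b)` is the number of occurrences of the
letter `a` in `ζ b`. -/
def substMatrixNat {m : ℕ} (ζ : Fin m → List (Fin m)) : Matrix (Fin m) (Fin m) ℕ :=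
  Matrix.of fun a b => (ζ b).count a

/-- The substitution matrix regarded as a complex matrix. -/
def substMatrixC {m : ℕ} (ζ : Fin m → List (Fin m)) : Matrix (Fin m) (Fin m) ℂ :=
  Matrix.of fun a b => ((ζ b).count a : ℂ)

/-- Primitivity: some power of the substitution matrix has all entries positive. -/
def IsPrimitive {m : ℕ} (ζ : Fin m → List (Fin m)) : Prop :=
  ∃ n : ℕ, ∀ a b, 0 < (substMatrixNat ζ ^ n) a b

/-- The shift by `k` on bi-infinite sequences; `shift 1` is the left shift `T`. -/
def shift {m : ℕ} (k : ℤ) (x : ℤ → Fin m) : ℤ → Fin m := fun n => x (n + k)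

/-- The word of length `l` occurring in `x` at position `k`. -/
def window {m : ℕ} (x : ℤ → Fin m) (k : ℤ) (l : ℕ) : List (Fin m) :=
  (List.range l).map fun i => x (k + i)

/-- The substitution space: bi-infinite sequences all of whose finite subwords occur in some
`ζⁿ(a)`. -/
def SubstSpace {m : ℕ} (ζ : Fin m → List (Fin m)) : Set (ℤ → Fin m) :=
  {x | ∀ (k : ℤ) (l : ℕ), ∃ (a : Fin m) (n : ℕ), (window x k l) <:+: (substWord ζ)^[n] [a]}

open Finset Matrix

theorem Finset.sum_range_mul_eq_sum_sum {M : Type*} [AddCommMonoid M] (f : ℕ → M) (q t : ℕ) :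
    ∑ p ∈ range (q * t), f p = ∑ i ∈ range t, ∑ r ∈ range q, f (q * i + r) := by
  induction t with
  | zero => simp
  | succ t ih => rw [Nat.mul_succ, sum_range_add, ih, sum_range_succ]

theorem eq_zero_of_forall_pow_mul_mem {K : Type*} [Field K] {θ c : K} (hθ0 : θ ≠ 0)
    (hθ : ¬IsOfFinOrder θ) {S : Set K} (hS : S.Finite) (h : ∀ k : ℕ, θ ^ k * c ∈ S) : c = 0 := by
  by_contra hc
  have hu : ¬IsOfFinOrder (Units.mk0 θ hθ0) := by rwa [← Units.isOfFinOrder_val]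
  have hinj : Function.Injective fun k : ℕ => θ ^ k * c := fun a b hab =>
    injective_pow_iff_not_isOfFinOrder.2 hu <| Units.ext <| by
      simpa using mul_right_cancel₀ hc hab
  exact Set.infinite_range_of_injective hinj (hS.subset (Set.range_subset_iff.2 h))

namespace Matrix

section

variable {K n : Type*} [Field K] [Fintype n] [DecidableEq n]

theorem mem_spectrum_iff_exists_mulVec_eq_smul (A : Matrix n n K) (θ : K) :
    θ ∈ spectrum K A ↔ ∃ v, v ≠ 0 ∧ A *ᵥ v = θ • v := by
  rw [mem_spectrum_iff_isRoot_charpoly, Polynomial.IsRoot, eval_charpoly,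
    ← exists_mulVec_eq_zero_iff]
  simp [sub_mulVec, sub_eq_zero, eq_comm]

theorem mem_spectrum_iff_exists_vecMul_eq_smul (A : Matrix n n K) (θ : K) :
    θ ∈ spectrum K A ↔ ∃ u, u ≠ 0 ∧ u ᵥ* A = θ • u := by
  rw [mem_spectrum_iff_isRoot_charpoly, ← charpoly_transpose, ← mem_spectrum_iff_isRoot_charpoly,
    mem_spectrum_iff_exists_mulVec_eq_smul]
  simp_rw [mulVec_transpose]

theorem pow_mulVec_eq_pow_smul {A : Matrix n n K} {x : n → K} {θ : K} (hx : A *ᵥ x = θ • x)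
    (k : ℕ) : A ^ k *ᵥ x = θ ^ k • x := by
  induction k with
  | zero => simp
  | succ k ih => rw [pow_succ', ← mulVec_mulVec, ih, mulVec_smul, hx, smul_smul, pow_succ]

theorem vecMul_pow_eq_pow_smul {A : Matrix n n K} {u : n → K} {θ : K} (hu : u ᵥ* A = θ • u)
    (k : ℕ) : u ᵥ* A ^ k = θ ^ k • u := by
  induction k with
  | zero => simp
  | succ k ih => rw [pow_succ, ← vecMul_vecMul, ih, smul_vecMul, hu, smul_smul, pow_succ]

open Polynomial in
/-- By Cayley–Hamilton, `(charpoly A).eval θ * β = R ⬝ᵥ (aeval A (charpoly A) *ᵥ x) = 0`. -/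
theorem mem_spectrum_of_dotProduct_pow_mulVec (A : Matrix n n K) (R x : n → K) {θ β : K}
    (hβ : β ≠ 0) (h : ∀ k : ℕ, R ⬝ᵥ (A ^ k *ᵥ x) = θ ^ k * β) : θ ∈ spectrum K A := by
  have heval : ∀ p : K[X], R ⬝ᵥ (aeval A p *ᵥ x) = p.eval θ * β := by
    intro p
    induction p using Polynomial.induction_on' with
    | add p p' hp hp' => simp [add_mulVec, dotProduct_add, hp, hp', add_mul]
    | monomial k c =>
      simp [aeval_monomial, Algebra.algebraMap_eq_smul_one, smul_mulVec, h, mul_assoc]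
  have hchar := heval A.charpoly
  rw [aeval_self_charpoly, zero_mulVec, dotProduct_zero, eq_comm] at hchar
  exact mem_spectrum_iff_isRoot_charpoly.2 ((mul_eq_zero.mp hchar).resolve_right hβ)

end

theorem mem_spectrum_of_mul_eq_mul {K n n' : Type*} [Field K] [Fintype n] [Fintype n']
    [DecidableEq n'] {A : Matrix n n K} {B : Matrix n' n' K} {P : Matrix n' n K}
    (hP : P * A = B * P) {x : n → K} {θ : K} (hx : A *ᵥ x = θ • x) (hPx : P *ᵥ x ≠ 0) :
    θ ∈ spectrum K B :=
  (mem_spectrum_iff_exists_mulVec_eq_smul B θ).2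
    ⟨P *ᵥ x, hPx, by rw [mulVec_mulVec, ← hP, ← mulVec_mulVec, hx, mulVec_smul]⟩

end Matrix

namespace Substitution

variable {R K : Type*} [Semiring R] [Field K] {α β γ : Type*}

def pushforwardMatrix (R : Type*) [Semiring R] [DecidableEq γ] (f : β → γ) : Matrix γ β R :=
  of fun c b => if f b = c then 1 else 0

def countVec (R : Type*) [Semiring R] [DecidableEq α] (l : List α) : α → R :=
  fun a => (l.count a : R)

/-- `countMatrix ℂ ζ` is `substMatrixC ζ` and `countMatrix ℕ ζ` is `substMatrixNat ζ`. -/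
def countMatrix (R : Type*) [Semiring R] [DecidableEq α] (σ : β → List α) : Matrix α β R :=
  of fun a b => ((σ b).count a : R)

section Counting

variable [DecidableEq α] [DecidableEq β]

theorem countVec_nil : countVec R ([] : List α) = 0 := by
  ext; simp [countVec]

theorem countVec_cons (a : α) (l : List α) :
    countVec R (a :: l) = Pi.single a 1 + countVec R l := by
  ext b
  rcases eq_or_ne b a with rfl | h
  · simp [countVec, add_comm]
  · simp [countVec, h, h.symm]

theorem countVec_append (l l' : List α) :
    countVec R (l ++ l') = countVec R l + countVec R l' := by
  ext; simp [countVec]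

theorem dotProduct_countVec [Fintype α] (u : α → R) (l : List α) :
    u ⬝ᵥ countVec R l = (l.map u).sum := by
  induction l with
  | nil => simp [countVec_nil]
  | cons a l ih => simp [countVec_cons, dotProduct_add, ih]

theorem dotProduct_countVec_map_range [Fintype α] (u : α → R) (X : ℕ → α) (J : ℕ) :
    u ⬝ᵥ countVec R ((List.range J).map X) = ∑ p ∈ range J, u (X p) := by
  rw [dotProduct_countVec, List.map_map]
  induction J with
  | zero => simp
  | succ J ih => simp [List.range_succ, sum_range_succ, ih]

theorem countVec_map [Fintype α] (f : α → β) (l : List α) :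
    countVec R (l.map f) = pushforwardMatrix R f *ᵥ countVec R l := by
  induction l with
  | nil => simp [countVec_nil]
  | cons a l ih =>
    rw [List.map_cons, countVec_cons, countVec_cons, mulVec_add, ih, mulVec_single_one]
    congr 1
    ext b
    simp [pushforwardMatrix, Pi.single_apply, eq_comm]

theorem countVec_flatMap [Fintype β] (σ : β → List α) (l : List β) :
    countVec R (l.flatMap σ) = countMatrix R σ *ᵥ countVec R l := by
  induction l with
  | nil => simp [countVec_nil]
  | cons b l ih =>
    rw [List.flatMap_cons, countVec_append, countVec_cons, mulVec_add, ih, mulVec_single_one]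
    rfl

end Counting

section Pushforward

theorem pushforwardMatrix_comp [Fintype γ] [DecidableEq γ] {δ : Type*} [DecidableEq δ]
    (g : γ → δ) (f : β → γ) :
    pushforwardMatrix R (g ∘ f) = pushforwardMatrix R g * pushforwardMatrix R f := by
  ext d b
  simp [pushforwardMatrix, mul_apply]

theorem countMatrix_eq_add_pushforwardMatrix [DecidableEq γ] {σ τ : β → List γ} (g : β → γ)
    (h : ∀ b, σ b = τ b ++ [g b]) :
    countMatrix R σ = countMatrix R τ + pushforwardMatrix R g := by
  ext c b
  simp [countMatrix, pushforwardMatrix, h, List.count_singleton]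

variable [Fintype β] [DecidableEq γ]

theorem pushforwardMatrix_mulVec_single [DecidableEq β] (f : β → γ) (b : β) :
    pushforwardMatrix R f *ᵥ Pi.single b 1 = Pi.single (f b) 1 := by
  ext c
  simp [pushforwardMatrix, Pi.single_apply, eq_comm]

theorem pushforwardMatrix_mulVec_apply_of_injective {f : β → γ} (hf : f.Injective)
    (x : β → R) (b : β) : (pushforwardMatrix R f *ᵥ x) (f b) = x b := by
  classical
  simp [pushforwardMatrix, mulVec, dotProduct, hf.eq_iff]

theorem pushforwardMatrix_mulVec_apply_of_forall_ne {f : β → γ} {c : γ} (hc : ∀ b, f b ≠ c)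
    (x : β → R) : (pushforwardMatrix R f *ᵥ x) c = 0 := by
  simp [pushforwardMatrix, mulVec, dotProduct, hc]

theorem pushforwardMatrix_pow [DecidableEq β] (g : β → β) (k : ℕ) :
    pushforwardMatrix R g ^ k = pushforwardMatrix R g^[k] := by
  induction k with
  | zero => ext; simp [pushforwardMatrix, one_apply, eq_comm]
  | succ k ih => rw [pow_succ, ih, ← pushforwardMatrix_comp, ← Function.iterate_succ]

theorem mulVec_eq_zero_of_pushforwardMatrix_mulVec_eq_zero [Fintype γ] {ι : Type*}
    (A : Matrix ι β R) (f : β → γ) (hA : ∀ i b b', f b = f b' → A i b = A i b')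
    {x : β → R} (hx : pushforwardMatrix R f *ᵥ x = 0) : A *ᵥ x = 0 := by
  ext i
  rw [mulVec, dotProduct, ← sum_fiberwise univ f]
  refine sum_eq_zero fun c _ => ?_
  rcases isEmpty_or_nonempty {b // f b = c} with hc | ⟨⟨b₀, hb₀⟩⟩
  · exact sum_eq_zero fun b hb => (hc.false ⟨b, (mem_filter.1 hb).2⟩).elim
  · have hcol : ∀ b ∈ univ.filter (f · = c), A i b * x b = A i b₀ * x b := fun b hb => by
      rw [hA i b b₀ ((mem_filter.1 hb).2.trans hb₀.symm)]
    have hfib : ∑ b with f b = c, x b = 0 := by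
      simpa [pushforwardMatrix, mulVec, dotProduct, sum_filter] using congrFun hx c
    rw [sum_congr rfl hcol, ← mul_sum, hfib, mul_zero]

/-- The powers of the matrix of `g` are the matrices of the finitely many maps `g^[k]`. -/
theorem eq_zero_of_pushforwardMatrix_mulVec_eq_smul [DecidableEq β] (g : β → β) {θ : K}
    (hθ0 : θ ≠ 0) (hθ : ¬IsOfFinOrder θ) {x : β → K} (hx : pushforwardMatrix K g *ᵥ x = θ • x) :
    x = 0 := by
  ext b
  refine eq_zero_of_forall_pow_mul_mem hθ0 hθ
    (Set.finite_range fun f : β → β => (pushforwardMatrix K f *ᵥ x) b) fun k => ⟨g^[k], ?_⟩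
  change (pushforwardMatrix K g^[k] *ᵥ x) b = _
  rw [← pushforwardMatrix_pow, pow_mulVec_eq_pow_smul hx, Pi.smul_apply, smul_eq_mul]

theorem pushforwardMatrix_mul_countMatrix [DecidableEq β] [Fintype γ] {σ : β → List β}
    {τ : γ → List γ} (f : β → γ) (hf : ∀ b, (σ b).map f = τ (f b)) :
    pushforwardMatrix R f * countMatrix R σ = countMatrix R τ * pushforwardMatrix R f := by
  refine ext_of_mulVec_single fun b => ?_
  rw [← mulVec_mulVec, ← mulVec_mulVec, mulVec_single_one, pushforwardMatrix_mulVec_single,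
    mulVec_single_one]
  exact (countVec_map f (σ b)).symm.trans (congrArg (countVec R) (hf b))

end Pushforward

/-- `X = σ(Y)` for a substitution `σ` of constant length `q`: the block of `X` at `q * i` spells
`σ (Y i)`. A fixed point of `σ` is an `X` with `IsImage σ q X X`. -/
def IsImage (σ : β → List α) (q : ℕ) (Y : ℕ → β) (X : ℕ → α) : Prop :=
  ∀ i r, r < q → X (q * i + r) = (σ (Y i)).getD r (X 0)

namespace IsImage

variable {σ : β → List α} {q : ℕ} {Y : ℕ → β} {X : ℕ → α}

theorem map_range_eq (hlen : ∀ b, (σ b).length = q) (h : IsImage σ q Y X) (i : ℕ) :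
    (List.range q).map (fun r => X (q * i + r)) = σ (Y i) :=
  List.ext_getElem (by simp [hlen]) fun r h₁ h₂ => by
    simp [h i r (by simpa using h₁), h₂]

theorem map_range_mul_eq_flatMap (hlen : ∀ b, (σ b).length = q) (h : IsImage σ q Y X)
    (p t : ℕ) :
    (List.range (q * t)).map (fun j => X (q * p + j))
      = ((List.range t).map fun i => Y (p + i)).flatMap σ := by
  induction t with
  | zero => simp
  | succ t ih =>
    rw [Nat.mul_succ, List.range_add, List.map_append, ih, List.range_succ, List.map_append,
      List.flatMap_append, List.map_map]
    simp [← h.map_range_eq hlen (p + t), Function.comp_def, mul_add, add_assoc]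

theorem countVec_mul [DecidableEq α] [Fintype β] [DecidableEq β]
    (hlen : ∀ b, (σ b).length = q) (h : IsImage σ q Y X) (J : ℕ) :
    countVec R ((List.range (q * J)).map X)
      = countMatrix R σ *ᵥ countVec R ((List.range J).map Y) := by
  have := h.map_range_mul_eq_flatMap hlen 0 J
  simp only [mul_zero, zero_add] at this
  rw [this, countVec_flatMap]

variable [Fintype α] [DecidableEq α] {σ : α → List α}

theorem countVec_pow_mul (hlen : ∀ a, (σ a).length = q) (h : IsImage σ q X X) (k J : ℕ) :
    countVec R ((List.range (q ^ k * J)).map X)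
      = countMatrix R σ ^ k *ᵥ countVec R ((List.range J).map X) := by
  induction k with
  | zero => simp
  | succ k ih => rw [pow_succ', mul_assoc, h.countVec_mul hlen, ih, mulVec_mulVec, pow_succ']

theorem sum_range_pow_mul (hlen : ∀ a, (σ a).length = q) (h : IsImage σ q X X) {u : α → K}
    {θ : K} (hu : u ᵥ* countMatrix K σ = θ • u) (k J : ℕ) :
    ∑ p ∈ range (q ^ k * J), u (X p) = θ ^ k * ∑ p ∈ range J, u (X p) := by
  rw [← dotProduct_countVec_map_range, ← dotProduct_countVec_map_range, h.countVec_pow_mul hlen,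
    dotProduct_mulVec, vecMul_pow_eq_pow_smul hu, smul_dotProduct, smul_eq_mul]

theorem exists_forall_eq_of_pow_pos (hlen : ∀ a, (σ a).length = q) (h : IsImage σ q X X)
    {k : ℕ} {a b : α} (hab : 0 < (countMatrix ℕ σ ^ k) a b) :
    ∃ s < q ^ k, ∀ p, X p = b → X (q ^ k * p + s) = a := by
  induction k generalizing b with
  | zero =>
    obtain rfl : a = b := by by_contra hne; simp [one_apply, hne] at hab
    exact ⟨0, by simp, fun p hp => by simpa using hp⟩
  | succ k ih =>
    rw [pow_succ, mul_apply, sum_pos_iff] at hab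
    obtain ⟨c, -, hc⟩ := hab
    obtain ⟨hkac, hcb⟩ := CanonicallyOrderedAdd.mul_pos.1 hc
    obtain ⟨r, hr, hrc⟩ := List.mem_iff_getElem.1 (List.count_pos_iff.1 hcb)
    obtain ⟨s, hs, hsX⟩ := ih hkac
    have hrq : r < q := hlen b ▸ hr
    refine ⟨q ^ k * r + s, ?_, fun p hp => ?_⟩
    · calc q ^ k * r + s < q ^ k * (r + 1) := by rw [mul_add_one]; omega
        _ ≤ q ^ (k + 1) := by rw [pow_succ]; exact Nat.mul_le_mul_left _ hrq
    · have hXc : X (q * p + r) = c := by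
        rw [h p r hrq, hp, List.getD_eq_getElem _ _ hr, hrc]
      rw [← hsX _ hXc]
      ring_nf

end IsImage

section Primitive

variable {m q : ℕ} {ζ : Fin m → List (Fin m)} {U : ℕ → Fin m}

theorem IsImage.exists_eq (hprim : IsPrimitive ζ) (hlen : ∀ a, (ζ a).length = q)
    (hU : IsImage ζ q U U) (a : Fin m) : ∃ p, U p = a := by
  obtain ⟨k, hk⟩ := hprim
  obtain ⟨s, -, hs⟩ := hU.exists_forall_eq_of_pow_pos hlen (hk a (U 0))
  exact ⟨_, hs 0 rfl⟩

theorem IsImage.mod_eq_of_eq {h : ℕ} (hprim : IsPrimitive ζ) (hlen : ∀ a, (ζ a).length = q)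
    (hU : IsImage ζ q U U) (hcop : h.Coprime q) (hdvd : ∀ k : ℕ, 1 ≤ k → U k = U 0 → h ∣ k)
    {p p' : ℕ} (hpp' : U p = U p') : p % h = p' % h := by
  obtain ⟨k, hk⟩ := hprim
  obtain ⟨s, -, hs⟩ := hU.exists_forall_eq_of_pow_pos hlen (hk (U 0) (U p))
  have hdvd₀ : ∀ j, U j = U 0 → h ∣ j := fun j hj =>
    j.eq_zero_or_pos.elim (fun hj0 => hj0 ▸ dvd_zero h) fun hj0 => hdvd j hj0 hj
  have hmod : q ^ k * p + s ≡ q ^ k * p' + s [MOD h] :=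
    (Nat.modEq_zero_iff_dvd.2 (hdvd₀ _ (hs p rfl))).trans
      (Nat.modEq_zero_iff_dvd.2 (hdvd₀ _ (hs p' hpp'.symm))).symm
  exact Nat.ModEq.cancel_left_of_coprime (hcop.pow_right k) (Nat.ModEq.add_right_cancel' s hmod)

end Primitive

section Windows

/-- The substitution induced by `σ` on words of length `t`: the image of `v` lists the `q` words
of length `t` starting at positions `0, …, q - 1` of `σ(v)`. The default letter `d` is never
read when `σ` has constant length `q`. -/
def windowSubst (σ : α → List α) (q : ℕ) (d : α) (t : ℕ) (v : Fin t → α) : List (Fin t → α) :=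
  (List.range q).map fun r i => ((List.ofFn v).flatMap σ).getD (r + i) d

variable {σ : α → List α} {q : ℕ} (d : α)

theorem length_windowSubst (t : ℕ) (v : Fin t → α) : (windowSubst σ q d t v).length = q := by
  simp [windowSubst]

theorem length_flatMap_of_length_eq (hlen : ∀ a, (σ a).length = q) (l : List α) :
    (l.flatMap σ).length = q * l.length := by
  induction l with
  | nil => simp
  | cons a l ih => simp [hlen, ih, mul_add, add_comm]

theorem getD_flatMap_ofFn_init (hlen : ∀ a, (σ a).length = q) {t : ℕ} (v : Fin (t + 1) → α)
    {j : ℕ} (hj : j < q * t) :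
    ((List.ofFn v).flatMap σ).getD j d = ((List.ofFn (Fin.init v)).flatMap σ).getD j d := by
  rw [List.ofFn_succ', List.concat_eq_append, List.flatMap_append, List.getD_append _ _ _ _
    (by rwa [length_flatMap_of_length_eq hlen, List.length_ofFn])]
  rfl

theorem windowSubst_map_init (hlen : ∀ a, (σ a).length = q) {t : ℕ} (v : Fin (t + 1) → α) :
    (windowSubst σ q d (t + 1) v).map Fin.init = windowSubst σ q d t (Fin.init v) := by
  simp only [windowSubst, List.map_map]
  refine List.map_congr_left fun r hr => funext fun i => ?_
  have hri : r + i < q * t := by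
    have := List.mem_range.1 hr
    nlinarith [i.isLt]
  exact getD_flatMap_ofFn_init d hlen v hri

theorem windowSubst_one_map (hlen : ∀ a, (σ a).length = q) (v : Fin 1 → α) :
    (windowSubst σ q d 1 v).map (· 0) = σ (v 0) := by
  refine List.ext_getElem (by simp [windowSubst, hlen]) fun r h₁ h₂ => ?_
  simp [windowSubst, h₂]

theorem windowSubst_succ (t : ℕ) (v : Fin t → α) :
    windowSubst σ (q + 1) d t v
      = windowSubst σ q d t v ++ [fun i : Fin t => ((List.ofFn v).flatMap σ).getD (q + i) d] := by
  simp [windowSubst, List.range_succ]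

theorem windowSubst_eq_of_init_eq (hlen : ∀ a, (σ a).length = q + 1) {t : ℕ} (ht : 1 ≤ t)
    {v v' : Fin (t + 1) → α} (hv : Fin.init v = Fin.init v') :
    windowSubst σ q d (t + 1) v = windowSubst σ q d (t + 1) v' := by
  refine List.map_congr_left fun r hr => funext fun i => ?_
  have hri : r + i < (q + 1) * t := by
    have := List.mem_range.1 hr
    nlinarith [i.isLt]
  rw [getD_flatMap_ofFn_init d hlen v hri, getD_flatMap_ofFn_init d hlen v' hri, hv]

theorem IsImage.window (hlen : ∀ a, (σ a).length = q) {X : ℕ → α} (hX : IsImage σ q X X)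
    (t : ℕ) :
    IsImage (windowSubst σ q (X 0) t) q (fun p i => X (p + i)) (fun p i => X (p + i)) := by
  intro p r hr
  have hofFn : List.ofFn (fun i : Fin t => X (p + i)) = (List.range t).map fun i => X (p + i) :=
    List.ext_getElem (by simp) (by simp)
  simp only [windowSubst]
  rw [List.getD_eq_getElem _ _ (by simpa using hr)]
  ext i
  have hri : r + i < q * t := by nlinarith [i.isLt]
  simp only [List.getElem_map, List.getElem_range, hofFn, ← hX.map_range_mul_eq_flatMap hlen p t]
  rw [List.getD_eq_getElem _ _ (by simpa using hri)]
  simp [add_assoc]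

/-- Induction on `t`: `Fin.init` intertwines the matrices for lengths `t + 1` and `t`. An
eigenvector killed by its push-forward is one of the matrix of the self-map "last window", since
the other windows only depend on `Fin.init v`; that matrix has no eigenvalue `θ`. -/
theorem mem_spectrum_of_mem_spectrum_windowSubst [Fintype α] [DecidableEq α]
    (hlen : ∀ a, (σ a).length = q) (hq : 0 < q) {θ : K} (hθ0 : θ ≠ 0) (hθ : ¬IsOfFinOrder θ)
    {t : ℕ} (ht : 0 < t) (hθt : θ ∈ spectrum K (countMatrix K (windowSubst σ q d t))) :
    θ ∈ spectrum K (countMatrix K σ) := by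
  obtain ⟨q, rfl⟩ := Nat.exists_eq_add_one.2 hq
  obtain ⟨t, rfl⟩ := Nat.exists_eq_add_one.2 ht
  induction t with
  | zero =>
    obtain ⟨x, hx0, hx⟩ := (mem_spectrum_iff_exists_mulVec_eq_smul _ _).1 hθt
    have hinj : Function.Injective fun v : Fin 1 → α => v 0 :=
      fun v v' h => funext fun i => by rwa [Subsingleton.elim i 0]
    refine mem_spectrum_of_mul_eq_mul
      (pushforwardMatrix_mul_countMatrix _ (windowSubst_one_map d hlen)) hx fun hPx => hx0 ?_
    ext v
    rw [← pushforwardMatrix_mulVec_apply_of_injective hinj x v, hPx, Pi.zero_apply, Pi.zero_apply]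
  | succ t ih =>
    obtain ⟨x, hx0, hx⟩ := (mem_spectrum_iff_exists_mulVec_eq_smul _ _).1 hθt
    by_cases hPx : pushforwardMatrix K Fin.init *ᵥ x = 0
    · have hfirst : countMatrix K (windowSubst σ q d (t + 2)) *ᵥ x = 0 :=
        mulVec_eq_zero_of_pushforwardMatrix_mulVec_eq_zero _ Fin.init (fun y v v' hv => by
          simp only [countMatrix, of_apply, windowSubst_eq_of_init_eq d hlen t.succ_pos hv]) hPx
      refine absurd (eq_zero_of_pushforwardMatrix_mulVec_eq_smul
        (fun v (i : Fin (t + 2)) => ((List.ofFn v).flatMap σ).getD (q + i) d) hθ0 hθ ?_) hx0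
      rw [← hx, countMatrix_eq_add_pushforwardMatrix _ (windowSubst_succ d _), add_mulVec, hfirst,
        zero_add]
    · exact ih t.succ_pos (mem_spectrum_of_mul_eq_mul
        (pushforwardMatrix_mul_countMatrix _ (windowSubst_map_init d hlen)) hx hPx)

end Windows

section PureBase

variable {m m' q h : ℕ} {ζ : Fin m → List (Fin m)} {η : Fin m' → List (Fin m')}
  {φ : Fin m' → List (Fin m)} {U : ℕ → Fin m} {V : ℕ → Fin m'} {θ : ℂ}

theorem mem_spectrum_base_of_mem_spectrum (hh : 0 < h) (hlen : ∀ a, (ζ a).length = q)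
    (hprim : IsPrimitive ζ) (hU : IsImage ζ q U U) (hlen' : ∀ c, (η c).length = q)
    (hV : IsImage η q V V) (hφlen : ∀ c, (φ c).length = h) (hcode : IsImage φ h V U)
    (hθ0 : θ ≠ 0) (hθ : ¬IsOfFinOrder θ) (hθζ : θ ∈ spectrum ℂ (countMatrix ℂ ζ)) :
    θ ∈ spectrum ℂ (countMatrix ℂ η) := by
  obtain ⟨u, hu0, hu⟩ := (mem_spectrum_iff_exists_vecMul_eq_smul _ _).1 hθζ
  set P : ℕ → ℂ := fun J => ∑ p ∈ range J, u (U p)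
  have hPpow : ∀ k J, P (q ^ k * J) = θ ^ k * P J := hU.sum_range_pow_mul hlen hu
  have hPcode : ∀ J, P (h * J) = (u ᵥ* countMatrix ℂ φ) ⬝ᵥ countVec ℂ ((List.range J).map V) :=
    fun J => by rw [← dotProduct_mulVec, ← hcode.countVec_mul hφlen, dotProduct_countVec_map_range]
  by_cases hPh : ∃ k, P (h * k) ≠ 0
  · obtain ⟨k, hk⟩ := hPh
    refine mem_spectrum_of_dotProduct_pow_mulVec _ (u ᵥ* countMatrix ℂ φ)
      (countVec ℂ ((List.range k).map V)) hk fun n => ?_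
    rw [← hV.countVec_pow_mul hlen', ← hPcode, mul_left_comm, hPpow]
  · simp only [not_exists, not_not] at hPh
    have hblock : ∀ k r, r < h → P (h * k + r) = ∑ s ∈ range r, u ((φ (V k)).getD s (U 0)) :=
      fun k r hr => by
        change ∑ p ∈ range (h * k + r), u (U p) = _
        rw [sum_range_add, show ∑ p ∈ range (h * k), u (U p) = 0 from hPh k, zero_add]
        exact sum_congr rfl fun s hs => by rw [hcode k s ((mem_range.1 hs).trans hr)]
    have hPfin : ∀ J, P J ∈ Set.range fun cr : Fin m' × Fin h =>
        ∑ s ∈ range cr.2, u ((φ cr.1).getD s (U 0)) := fun J =>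
      ⟨(V (J / h), ⟨J % h, Nat.mod_lt J hh⟩), by
        simp only
        rw [← hblock _ _ (Nat.mod_lt J hh), Nat.div_add_mod]⟩
    have hP0 : ∀ J, P J = 0 := fun J =>
      eq_zero_of_forall_pow_mul_mem hθ0 hθ (Set.finite_range _) fun k => hPpow k J ▸ hPfin _
    refine absurd (funext fun a => ?_) hu0
    obtain ⟨p, rfl⟩ := hU.exists_eq hprim hlen a
    have hsucc : P (p + 1) = P p + u (U p) := sum_range_succ _ _
    rw [hP0, hP0, zero_add] at hsucc
    exact hsucc.symm

/-- A window of `U` that is a block `φ c` starts at a multiple of `h`, so weighting such windows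
by `z c` recovers the sums of `z` along `V`. -/
theorem exists_dotProduct_countVec_windows_eq (hh : 0 < h) (hlen : ∀ a, (ζ a).length = q)
    (hprim : IsPrimitive ζ) (hU : IsImage ζ q U U) (hcop : h.Coprime q)
    (hdvd : ∀ k : ℕ, 1 ≤ k → U k = U 0 → h ∣ k) (hφlen : ∀ c, (φ c).length = h)
    (hφinj : Function.Injective φ)
    (hblocks : ∀ c, ∃ k : ℕ, φ c = (List.range h).map fun r => U (h * k + r))
    (hcode : IsImage φ h V U) (z : Fin m' → ℂ) :
    ∃ R : (Fin h → Fin m) → ℂ, ∀ J, R ⬝ᵥ countVec ℂ ((List.range (h * J)).map fun p i => U (p + i))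
      = ∑ i ∈ range J, z (V i) := by
  let blk : Fin m' → Fin h → Fin m := fun c i => (φ c).getD i (U 0)
  have hblk : Function.Injective blk := fun c c' hcc' => hφinj <|
    List.ext_getElem (by rw [hφlen, hφlen]) fun i h₁ h₂ => by
      have : (φ c).getD i (U 0) = (φ c').getD i (U 0) := congrFun hcc' ⟨i, hφlen c ▸ h₁⟩
      rwa [List.getD_eq_getElem _ _ h₁, List.getD_eq_getElem _ _ h₂] at this
  have hdvd_of_eq : ∀ p c, blk c = (fun i : Fin h => U (p + i)) → h ∣ p := fun p c hcp => by
    obtain ⟨k, hk⟩ := hblocks c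
    have hUp : U (h * k) = U p := by
      simpa [blk, hk, List.getD_eq_getElem, hh] using congrFun hcp ⟨0, hh⟩
    have := hU.mod_eq_of_eq hprim hlen hcop hdvd hUp
    rw [Nat.mul_mod_right] at this
    exact Nat.dvd_of_mod_eq_zero this.symm
  refine ⟨pushforwardMatrix ℂ blk *ᵥ z, fun J => ?_⟩
  rw [dotProduct_countVec_map_range, sum_range_mul_eq_sum_sum]
  refine sum_congr rfl fun i _ => ?_
  rw [sum_eq_single_of_mem 0 (mem_range.2 hh) fun r hr hr0 => ?_]
  · have hblkV : (fun j : Fin h => U (h * i + 0 + j)) = blk (V i) :=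
      funext fun j => by rw [add_zero]; exact hcode i j j.isLt
    rw [hblkV, pushforwardMatrix_mulVec_apply_of_injective hblk]
  · refine pushforwardMatrix_mulVec_apply_of_forall_ne (fun c hc => hr0 ?_) z
    exact Nat.eq_zero_of_dvd_of_lt
      ((Nat.dvd_add_right (dvd_mul_right h i)).1 (hdvd_of_eq _ c hc)) (mem_range.1 hr)

theorem mem_spectrum_of_mem_spectrum_base (hq : 0 < q) (hh : 0 < h)
    (hlen : ∀ a, (ζ a).length = q) (hprim : IsPrimitive ζ) (hU : IsImage ζ q U U)
    (hcop : h.Coprime q) (hdvd : ∀ k : ℕ, 1 ≤ k → U k = U 0 → h ∣ k)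
    (hlen' : ∀ c, (η c).length = q) (hV : IsImage η q V V) (hφlen : ∀ c, (φ c).length = h)
    (hφinj : Function.Injective φ)
    (hblocks : ∀ c, ∃ k : ℕ, φ c = (List.range h).map fun r => U (h * k + r))
    (hcode : IsImage φ h V U) (hθ0 : θ ≠ 0) (hθ : ¬IsOfFinOrder θ)
    (hθη : θ ∈ spectrum ℂ (countMatrix ℂ η)) : θ ∈ spectrum ℂ (countMatrix ℂ ζ) := by
  obtain ⟨z, hz0, hz⟩ := (mem_spectrum_iff_exists_vecMul_eq_smul _ _).1 hθη
  obtain ⟨k₀, hk₀⟩ : ∃ k, ∑ i ∈ range k, z (V i) ≠ 0 := by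
    by_contra! hPV
    refine hz0 (funext fun c => ?_)
    obtain ⟨k, hk⟩ := hblocks c
    obtain rfl : V k = c := hφinj (by rw [hk, hcode.map_range_eq hφlen])
    simpa [sum_range_succ, hPV k] using hPV (k + 1)
  obtain ⟨R, hR⟩ :=
    exists_dotProduct_countVec_windows_eq hh hlen hprim hU hcop hdvd hφlen hφinj hblocks hcode z
  refine mem_spectrum_of_mem_spectrum_windowSubst (U 0) hlen hq hθ0 hθ hh
    (mem_spectrum_of_dotProduct_pow_mulVec _ R
      (countVec ℂ ((List.range (h * k₀)).map fun p i => U (p + i))) hk₀ fun k => ?_)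
  rw [← (hU.window hlen h).countVec_pow_mul (length_windowSubst (U 0) h), mul_left_comm, hR,
    hV.sum_range_pow_mul hlen' hz]

end PureBase

end Substitution

theorem pure_base_substitution_matrix_spectrum_general
    {m m' q h : ℕ} (hh : 2 ≤ h)
    (ζ : Fin m → List (Fin m)) (hlen : ∀ a, (ζ a).length = q)
    (hprim : IsPrimitive ζ)
    -- a one-sided fixed point `U` of `ζ`
    (U : ℕ → Fin m)
    (hU : ∀ i r : ℕ, r < q → U (q * i + r) = (ζ (U i)).getD r (U 0))
    -- `ζ` has height exactly `h`
    (hcop : Nat.Coprime h q)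
    (hdvd : ∀ k : ℕ, 1 ≤ k → U k = U 0 → h ∣ k)
    -- the pure base substitution `η` on the alphabet `ℐ = Fin m'` of length-`h` blocks of `U`,
    -- with injective coding map `φ` such that `φ ∘ η = ζ ∘ φ`
    (η : Fin m' → List (Fin m')) (hlen' : ∀ c, (η c).length = q)
    (φ : Fin m' → List (Fin m)) (hφlen : ∀ c, (φ c).length = h)
    (hφinj : Function.Injective φ)
    -- every letter of `ℐ` is a length-`h` block of `U` starting at a position divisible by `h`,
    -- and conversely every such block arises
    (hblocks : ∀ c : Fin m', ∃ k : ℕ, φ c = (List.range h).map fun r => U (h * k + r))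
    -- the one-sided fixed point `V` of `η`, with `φ(V) = U`
    (V : ℕ → Fin m')
    (hV : ∀ i r : ℕ, r < q → V (q * i + r) = (η (V i)).getD r (V 0))
    (hcode : ∀ k r : ℕ, r < h → U (h * k + r) = (φ (V k)).getD r (U 0)) :
    ∀ θ : ℂ, θ ≠ 0 → (∀ n : ℕ, 1 ≤ n → θ ^ n ≠ 1) →
      ((∃ v : Fin m → ℂ, v ≠ 0 ∧ (substMatrixC ζ).mulVec v = θ • v) ↔
        (∃ w : Fin m' → ℂ, w ≠ 0 ∧ (substMatrixC η).mulVec w = θ • w)) := by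
  intro θ hθ0 hθ1
  have hθ : ¬IsOfFinOrder θ := fun hfin => by
    obtain ⟨n, hn, hθn⟩ := isOfFinOrder_iff_pow_eq_one.1 hfin
    exact hθ1 n hn hθn
  have hq : 0 < q := Nat.pos_of_ne_zero fun hq0 => by
    rw [hq0, Nat.coprime_zero_right] at hcop
    omega
  rw [← mem_spectrum_iff_exists_mulVec_eq_smul, ← mem_spectrum_iff_exists_mulVec_eq_smul]
  exact ⟨Substitution.mem_spectrum_base_of_mem_spectrum (by omega) hlen hprim hU hlen' hV hφlen
      hcode hθ0 hθ,
    Substitution.mem_spectrum_of_mem_spectrum_base hq (by omega) hlen hprim hU hcop hdvd hlen' hV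
      hφlen hφinj hblocks hcode hθ0 hθ⟩

/-- Let `ζ` be a primitive aperiodic substitution of constant length `q` and
height `h > 1` with one-sided fixed point `U`, and let `η` be its pure base substitution on the
alphabet `ℐ` (of cardinality `m'`) of length-`h` blocks of `U`, with coding map `φ` satisfying
`φ ∘ η = ζ ∘ φ` and `φ(V) = U` for the fixed point `V` of `η`.  Then the spectra of `S_ζ` and
`S_η` differ only by `0` or roots of unity: for every `θ ≠ 0` with `θⁿ ≠ 1` for all `n ≥ 1`,
`θ` is an eigenvalue of `S_ζ` iff it is an eigenvalue of `S_η`. -/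
theorem pure_base_substitution_matrix_spectrum
    {m m' q h : ℕ} (hm : 2 ≤ m) (hh : 2 ≤ h)
    (ζ : Fin m → List (Fin m)) (hlen : ∀ a, (ζ a).length = q)
    (hprim : IsPrimitive ζ) (haper : (SubstSpace ζ).Infinite)
    -- a one-sided fixed point `U` of `ζ`
    (U : ℕ → Fin m)
    (hU : ∀ i r : ℕ, r < q → U (q * i + r) = (ζ (U i)).getD r (U 0))
    -- `ζ` has height exactly `h`
    (hcop : Nat.Coprime h q)
    (hdvd : ∀ k : ℕ, 1 ≤ k → U k = U 0 → h ∣ k)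
    (hmax : ∀ n : ℕ, Nat.Coprime n q → (∀ k : ℕ, 1 ≤ k → U k = U 0 → n ∣ k) → n ≤ h)
    -- the pure base substitution `η` on the alphabet `ℐ = Fin m'` of length-`h` blocks of `U`,
    -- with injective coding map `φ` such that `φ ∘ η = ζ ∘ φ`
    (η : Fin m' → List (Fin m')) (hlen' : ∀ c, (η c).length = q)
    (φ : Fin m' → List (Fin m)) (hφlen : ∀ c, (φ c).length = h)
    (hφinj : Function.Injective φ)
    (hcomm : ∀ c, (η c).flatMap φ = substWord ζ (φ c))
    -- every letter of `ℐ` is a length-`h` block of `U` starting at a position divisible by `h`,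
    -- and conversely every such block arises
    (hblocks : ∀ c : Fin m', ∃ k : ℕ, φ c = (List.range h).map fun r => U (h * k + r))
    (hblocks' : ∀ k : ℕ, ∃ c : Fin m', φ c = (List.range h).map fun r => U (h * k + r))
    -- the one-sided fixed point `V` of `η`, with `φ(V) = U`
    (V : ℕ → Fin m')
    (hV : ∀ i r : ℕ, r < q → V (q * i + r) = (η (V i)).getD r (V 0))
    (hcode : ∀ k r : ℕ, r < h → U (h * k + r) = (φ (V k)).getD r (U 0)) :
    ∀ θ : ℂ, θ ≠ 0 → (∀ n : ℕ, 1 ≤ n → θ ^ n ≠ 1) →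
      ((∃ v : Fin m → ℂ, v ≠ 0 ∧ (substMatrixC ζ).mulVec v = θ • v) ↔
        (∃ w : Fin m' → ℂ, w ≠ 0 ∧ (substMatrixC η).mulVec w = θ • w)) :=
  pure_base_substitution_matrix_spectrum_general hh ζ hlen hprim U hU hcop hdvd η hlen' φ hφlen
    hφinj hblocks V hV hcode
end

section
/- Let ζ be a primitive aperiodic substitution of constant length q and height h > 1 with one-sided fixed point U, and let η be its pure base substitution on the alphabet ℐ with coding map φ (satisfying φ ∘ η = ζ ∘ φ and φ(V) = U for the fixed point V = v₀v₁v₂… of η). Then the map ψ defined by ψ(w) = φ(w) is a well-defined bijection from the set of return words ℛ_{V,v₀} onto the set of return words ℛ_{U,φ(v₀)}, and it conjugates the induced return-word substitutions: Θ_{U,φ(v₀)}(ψ(r)) = ψ(r₁)ψ(r₂)…ψ(r_n) whenever Θ_{V,v₀}(r) = r₁r₂…r_n, for all r ∈ ℛ_{V,v₀}. -/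
open MeasureTheory Filter

-- quick sanity checks
/-- `u` occurs in the one-sided sequence `U` at position `i`. -/
def OccursAt {α : Type*} (U : ℕ → α) (u : List α) (i : ℕ) : Prop :=
  (List.range u.length).map (fun r => U (i + r)) = u

/-- The set of return words of `U` on the word `u`: words read between two consecutive
occurrences of `u` in `U`. -/
def ReturnWords {α : Type*} (U : ℕ → α) (u : List α) : Set (List α) :=
  {w | ∃ i j : ℕ, i < j ∧ OccursAt U u i ∧ OccursAt U u j ∧
      (∀ l : ℕ, i < l → l < j → ¬OccursAt U u l) ∧
      w = (List.range (j - i)).map fun r => U (i + r)}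



namespace PBAux

variable {α : Type*}

/-- The window of `x` at position `i` of length `l`. -/
def win (x : ℕ → α) (i l : ℕ) : List α := (List.range l).map fun r => x (i + r)

lemma win_length (x : ℕ → α) (i l : ℕ) : (win x i l).length = l := by
  simp [win]

lemma win_add (x : ℕ → α) (i a b : ℕ) :
    win x i (a + b) = win x i a ++ win x (i + a) b := by
  unfold win
  rw [List.range_add, List.map_append, List.map_map]
  congr 1
  apply List.map_congr_left
  intro r _
  simp [Function.comp]
  ring_nf

lemma win_take (x : ℕ → α) {i a l : ℕ} (hal : a ≤ l) :
    (win x i l).take a = win x i a := by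
  have : l = a + (l - a) := by omega
  rw [this, win_add, List.take_left' (win_length x i a)]

lemma win_drop (x : ℕ → α) {i a l : ℕ} (hal : a ≤ l) :
    (win x i l).drop a = win x (i + a) (l - a) := by
  have : l = a + (l - a) := by omega
  rw [this, win_add, List.drop_left' (win_length x i a)]
  congr 1; omega

/-- A "good return word" for the marker `u`. -/
def GoodRet (u w : List α) : Prop :=
  0 < w.length ∧ u <+: w ++ u ∧
    ∀ p : ℕ, u <+: (w ++ u).drop p → p = 0 ∨ p = w.length

lemma prefix_flatten {u : List α} {L : List (List α)}
    (hL : ∀ w ∈ L, GoodRet u w) : u <+: L.flatten ++ u := by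
  induction L with
  | nil => simp
  | cons w t ih =>
    have hw := hL w (by simp)
    have ht : u <+: t.flatten ++ u := ih fun w' hw' => hL w' (by simp [hw'])
    obtain ⟨s, hs⟩ := ht
    have : (w :: t).flatten ++ u = (w ++ u) ++ s := by
      simp only [List.flatten_cons, List.append_assoc, hs]
    rw [this]
    exact hw.2.1.trans (List.prefix_append _ _)

lemma heads_eq_aux {u w1 w2 A B : List α}
    (h1 : GoodRet u w1) (h2 : GoodRet u w2)
    (hA : u <+: A ++ u) (hB : u <+: B ++ u)
    (heq : w1 ++ A = w2 ++ B) (hle : w1.length ≤ w2.length) : w1 = w2 := by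
  -- w1 is a prefix of w2
  have hp1 : w1 <+: w2 ++ B := heq ▸ List.prefix_append w1 A
  have hp : w1 <+: w2 := by
    rcases Nat.lt_or_ge w1.length w2.length with hlt | hge
    · exact List.prefix_of_prefix_length_le hp1 (List.prefix_append _ _) (le_of_lt hlt)
    · exact List.prefix_of_prefix_length_le hp1 (List.prefix_append _ _) hle
  rcases eq_or_lt_of_le hle with hl | hlt
  · exact hp.eq_of_length hl
  · exfalso
    -- u occurs in w2 ++ u at position w1.length, contradicting GoodRet
    obtain ⟨s, hs⟩ := hB
    have hdrop : (w2 ++ B ++ u).drop w1.length = A ++ u := by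
      rw [← heq, List.append_assoc, List.drop_left' rfl]
    have h2' : w2 ++ B ++ u = (w2 ++ u) ++ s := by
      rw [List.append_assoc, ← hs, List.append_assoc]
    have hocc : u <+: (w2 ++ u).drop w1.length := by
      have h3 : u <+: ((w2 ++ u) ++ s).drop w1.length := by
        rw [← h2', hdrop]; exact hA
      have h4 : ((w2 ++ u) ++ s).drop w1.length
          = (w2 ++ u).drop w1.length ++ s := by
        apply List.drop_append_of_le_length
        simp; omega
      rw [h4] at h3
      apply List.prefix_of_prefix_length_le h3 (List.prefix_append _ _)
      simp [List.length_drop]; omega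
    have hpos := h1.1
    rcases h2.2.2 w1.length hocc with h0 | hw
    · omega
    · omega

lemma unique_fact {u : List α} :
    ∀ L1 L2 : List (List α), (∀ w ∈ L1, GoodRet u w) → (∀ w ∈ L2, GoodRet u w) →
      L1.flatten = L2.flatten → L1 = L2 := by
  intro L1
  induction L1 with
  | nil =>
    intro L2 _ hL2 hflat
    cases L2 with
    | nil => rfl
    | cons w t =>
      exfalso
      have hw := (hL2 w (by simp)).1
      have h0 := congrArg List.length hflat
      simp only [List.flatten_nil, List.flatten_cons, List.length_nil,
        List.length_append] at h0
      omega
  | cons w1 t1 ih =>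
    intro L2 hL1 hL2 hflat
    cases L2 with
    | nil =>
      exfalso
      have hw := (hL1 w1 (by simp)).1
      have h0 := congrArg List.length hflat
      simp only [List.flatten_nil, List.flatten_cons, List.length_nil,
        List.length_append] at h0
      omega
    | cons w2 t2 =>
      have h1 : GoodRet u w1 := hL1 w1 (by simp)
      have h2 : GoodRet u w2 := hL2 w2 (by simp)
      have ht1 : ∀ w ∈ t1, GoodRet u w := fun w hw => hL1 w (by simp [hw])
      have ht2 : ∀ w ∈ t2, GoodRet u w := fun w hw => hL2 w (by simp [hw])
      have hA : u <+: t1.flatten ++ u := prefix_flatten ht1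
      have hB : u <+: t2.flatten ++ u := prefix_flatten ht2
      have heq : w1 ++ t1.flatten = w2 ++ t2.flatten := by simpa using hflat
      have hww : w1 = w2 := by
        rcases le_total w1.length w2.length with hle | hle
        · exact heads_eq_aux h1 h2 hA hB heq hle
        · exact (heads_eq_aux h2 h1 hB hA heq.symm hle).symm
      subst hww
      have heq' : t1.flatten = t2.flatten := by
        exact List.append_cancel_left heq
      rw [ih t2 ht1 ht2 heq']

lemma flatten_map_flatMap {β : Type*} (L : List (List α)) (f : α → List β) :
    (L.map (fun w => w.flatMap f)).flatten = L.flatten.flatMap f := by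
  induction L with
  | nil => rfl
  | cons w t ih => simp [ih]

end PBAux

/-- Let `ζ` be a primitive aperiodic substitution of constant length `q` and
height `h > 1` with one-sided fixed point `U`, and let `η` be its pure base substitution on the
alphabet `ℐ` with coding map `φ` (so `φ ∘ η = ζ ∘ φ` and `φ(V) = U` for the fixed point `V` of
`η`).  Then `ψ(w) = φ(w)` is a well-defined bijection from the return words `ℛ_{V,v₀}` onto the
return words `ℛ_{U,φ(v₀)}`, and it conjugates the induced return-word substitutions:
`Θ_{U,φ(v₀)}(ψ r) = ψ(r₁)⋯ψ(r_n)` whenever `Θ_{V,v₀}(r) = r₁⋯r_n`. -/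
theorem pure_base_return_word_substitutions_conjugate
    {m m' q h : ℕ} (hm : 2 ≤ m) (hh : 2 ≤ h)
    (ζ : Fin m → List (Fin m)) (hlen : ∀ a, (ζ a).length = q)
    (hprim : IsPrimitive ζ) (haper : (SubstSpace ζ).Infinite)
    (U : ℕ → Fin m)
    (hU : ∀ i r : ℕ, r < q → U (q * i + r) = (ζ (U i)).getD r (U 0))
    -- `ζ` has height exactly `h`
    (hcop : Nat.Coprime h q)
    (hdvd : ∀ k : ℕ, 1 ≤ k → U k = U 0 → h ∣ k)
    (hmax : ∀ n : ℕ, Nat.Coprime n q → (∀ k : ℕ, 1 ≤ k → U k = U 0 → n ∣ k) → n ≤ h)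
    -- the pure base substitution `η` with injective coding `φ`, `φ ∘ η = ζ ∘ φ`
    (η : Fin m' → List (Fin m')) (hlen' : ∀ c, (η c).length = q)
    (φ : Fin m' → List (Fin m)) (hφlen : ∀ c, (φ c).length = h)
    (hφinj : Function.Injective φ)
    (hcomm : ∀ c, (η c).flatMap φ = substWord ζ (φ c))
    (hblocks : ∀ c : Fin m', ∃ k : ℕ, φ c = (List.range h).map fun r => U (h * k + r))
    -- the one-sided fixed point `V` of `η`, with `φ(V) = U`
    (V : ℕ → Fin m')
    (hV : ∀ i r : ℕ, r < q → V (q * i + r) = (η (V i)).getD r (V 0))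
    (hcode : ∀ k r : ℕ, r < h → U (h * k + r) = (φ (V k)).getD r (U 0))
    -- the return-word substitution `Θ_{V,v₀}` induced by `η`: it maps each return word `r` to
    -- the (unique) factorization of `η(r)` into return words on `v₀`
    (ΘV : List (Fin m') → List (List (Fin m')))
    (hΘV : ∀ r ∈ ReturnWords V [V 0],
        (∀ w ∈ ΘV r, w ∈ ReturnWords V [V 0]) ∧ (ΘV r).flatten = substWord η r)
    -- the return-word substitution `Θ_{U,φ(v₀)}` induced by `ζ`
    (ΘU : List (Fin m) → List (List (Fin m)))
    (hΘU : ∀ r ∈ ReturnWords U (φ (V 0)),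
        (∀ w ∈ ΘU r, w ∈ ReturnWords U (φ (V 0))) ∧ (ΘU r).flatten = substWord ζ r) :
    Set.BijOn (fun w => w.flatMap φ) (ReturnWords V [V 0]) (ReturnWords U (φ (V 0))) ∧
      ∀ r ∈ ReturnWords V [V 0],
        ΘU (r.flatMap φ) = (ΘV r).map fun w => w.flatMap φ := by
  -- the window at block `k` of `U` is `φ (V k)`
  have hwinU : ∀ k : ℕ, PBAux.win U (h * k) h = φ (V k) := by
    intro k
    apply List.ext_getElem (by rw [PBAux.win_length, hφlen])
    intro n h1 h2
    rw [PBAux.win_length] at h1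
    have hc := hcode k n h1
    rw [List.getD_eq_getElem _ _ (by rw [hφlen]; exact h1)] at hc
    simpa [PBAux.win] using hc
  -- occurrence characterizations
  have hOccU : ∀ i, OccursAt U (φ (V 0)) i ↔ PBAux.win U i h = φ (V 0) := by
    intro i
    unfold OccursAt PBAux.win
    rw [hφlen]
  have hOccV : ∀ k, OccursAt V [V 0] k ↔ V k = V 0 := by
    intro k
    unfold OccursAt
    simp [List.range_succ]
  -- forward occurrence transfer
  have hfwd : ∀ i, OccursAt U (φ (V 0)) i → ∃ k, i = h * k ∧ V k = V 0 := by
    intro i hi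
    rw [hOccU] at hi
    have hi0 : PBAux.win U i h = PBAux.win U (h * 0) h := by
      rw [hwinU 0, hi]
    have hfirst : U i = U 0 := by
      have ht := congrArg (List.take 1) hi0
      rw [PBAux.win_take U (by omega), PBAux.win_take U (by omega)] at ht
      simpa [PBAux.win] using ht
    have hdi : h ∣ i := by
      rcases Nat.eq_zero_or_pos i with h0 | h0
      · simp [h0]
      · exact hdvd i h0 hfirst
    obtain ⟨k, rfl⟩ := hdi
    have : φ (V k) = φ (V 0) := by rw [← hwinU k]; exact hi
    exact ⟨k, rfl, hφinj this⟩
  have hbwd : ∀ k, V k = V 0 → OccursAt U (φ (V 0)) (h * k) := by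
    intro k hk
    rw [hOccU, hwinU, hk]
  -- the coding of windows
  have hflatwin : ∀ k l : ℕ,
      (PBAux.win V k l).flatMap φ = PBAux.win U (h * k) (h * l) := by
    intro k l
    induction l with
    | zero => simp [PBAux.win]
    | succ l ih =>
      have e1 : PBAux.win V k (l + 1) = PBAux.win V k l ++ PBAux.win V (k + l) 1 :=
        PBAux.win_add V k l 1
      have e2 : PBAux.win V (k + l) 1 = [V (k + l)] := by
        unfold PBAux.win
        simp [List.range_succ]
      have e3 : h * (l + 1) = h * l + h := by ring
      rw [e1, e2, List.flatMap_append, ih, e3, PBAux.win_add U (h * k) (h * l) h]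
      congr 1
      · simp [List.flatMap]
        rw [← Nat.mul_add, hwinU (k + l)]
  -- strict monotonicity helper
  have hmul_lt : ∀ {a b : ℕ}, a < b → h * a < h * b := fun hab =>
    Nat.mul_lt_mul_of_le_of_lt (le_refl h) hab (by omega)
  -- forward map on return words
  have hMapsTo : ∀ r ∈ ReturnWords V [V 0], r.flatMap φ ∈ ReturnWords U (φ (V 0)) := by
    rintro r ⟨i, j, hij, hoi, hoj, hbet, rfl⟩
    refine ⟨h * i, h * j, hmul_lt hij, hbwd i ((hOccV i).1 hoi), hbwd j ((hOccV j).1 hoj),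
      ?_, ?_⟩
    · intro l hl1 hl2 hocc
      obtain ⟨k, rfl, hk⟩ := hfwd l hocc
      exact hbet k (Nat.lt_of_mul_lt_mul_left hl1) (Nat.lt_of_mul_lt_mul_left hl2)
        ((hOccV k).2 hk)
    · show (PBAux.win V i (j - i)).flatMap φ = PBAux.win U (h * i) (h * j - h * i)
      rw [hflatwin, Nat.mul_sub]
  -- injectivity of the coding on words
  have hinj : ∀ w1 w2 : List (Fin m'), w1.flatMap φ = w2.flatMap φ → w1 = w2 := by
    intro w1
    induction w1 with
    | nil =>
      intro w2 he
      cases w2 with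
      | nil => rfl
      | cons c t =>
        exfalso
        have := congrArg List.length he
        simp [hφlen] at this
        omega
    | cons c t ih =>
      intro w2 he
      cases w2 with
      | nil =>
        exfalso
        have := congrArg List.length he
        simp [hφlen] at this
        omega
      | cons c' t' =>
        simp only [List.flatMap_cons] at he
        have h1 : φ c = φ c' := by
          have := congrArg (List.take h) he
          rwa [List.take_left' (hφlen c), List.take_left' (hφlen c')] at this
        have h2 : t.flatMap φ = t'.flatMap φ := by
          have := congrArg (List.drop h) he
          rwa [List.drop_left' (hφlen c), List.drop_left' (hφlen c')] at this
        rw [hφinj h1, ih t' h2]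
  -- surjectivity onto return words of U
  have hSurj : Set.SurjOn (fun w => w.flatMap φ) (ReturnWords V [V 0])
      (ReturnWords U (φ (V 0))) := by
    rintro w' ⟨i', j', hij, hoi, hoj, hbet, rfl⟩
    obtain ⟨i, rfl, hVi⟩ := hfwd i' hoi
    obtain ⟨j, rfl, hVj⟩ := hfwd j' hoj
    have hijV : i < j := Nat.lt_of_mul_lt_mul_left hij
    refine ⟨PBAux.win V i (j - i), ⟨i, j, hijV, (hOccV i).2 hVi, (hOccV j).2 hVj, ?_, rfl⟩, ?_⟩
    · intro l hl1 hl2 hocc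
      exact hbet (h * l) (hmul_lt hl1) (hmul_lt hl2) (hbwd l ((hOccV l).1 hocc))
    · show (PBAux.win V i (j - i)).flatMap φ = PBAux.win U (h * i) (h * j - h * i)
      rw [hflatwin, Nat.mul_sub]
  -- every return word of U is good
  have hGood : ∀ w ∈ ReturnWords U (φ (V 0)), PBAux.GoodRet (φ (V 0)) w := by
    rintro w ⟨i, j, hij, hoi, hoj, hbet, rfl⟩
    show PBAux.GoodRet (φ (V 0)) (PBAux.win U i (j - i))
    rw [hOccU] at hoi hoj
    have hlenw : (PBAux.win U i (j - i)).length = j - i := PBAux.win_length U i (j - i)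
    have hwu : PBAux.win U i (j - i) ++ φ (V 0) = PBAux.win U i ((j - i) + h) := by
      rw [PBAux.win_add U i (j - i) h]
      congr 1
      rw [show i + (j - i) = j by omega, hoj]
    refine ⟨by rw [hlenw]; omega, ?_, ?_⟩
    · rw [hwu]
      refine ⟨PBAux.win U (i + h) (j - i), ?_⟩
      rw [← hoi, ← PBAux.win_add U i h (j - i), Nat.add_comm h (j - i)]
    · intro p hp
      rw [hwu] at hp
      have hplen : h ≤ ((j - i) + h) - p := by
        have := hp.length_le
        rw [List.length_drop, PBAux.win_length, hφlen] at this
        omega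
      have hple : p ≤ j - i := by omega
      rw [PBAux.win_drop U (by omega)] at hp
      have htake : φ (V 0) = PBAux.win U (i + p) h := by
        have := List.prefix_iff_eq_take.1 hp
        rw [hφlen, PBAux.win_take U hplen] at this
        exact this
      have hocc : OccursAt U (φ (V 0)) (i + p) := (hOccU (i + p)).2 htake.symm
      rcases Nat.eq_zero_or_pos p with h0 | h0
      · left; exact h0
      · right
        rw [hlenw]
        by_contra hne
        exact hbet (i + p) (by omega) (by omega) hocc
  have hbij : Set.BijOn (fun w => w.flatMap φ) (ReturnWords V [V 0])
      (ReturnWords U (φ (V 0))) :=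
    ⟨hMapsTo, fun w1 _ w2 _ he => hinj w1 w2 he, hSurj⟩
  refine ⟨hbij, ?_⟩
  intro r hr
  have hr' : r.flatMap φ ∈ ReturnWords U (φ (V 0)) := hMapsTo r hr
  obtain ⟨hU1, hU2⟩ := hΘU _ hr'
  obtain ⟨hV1, hV2⟩ := hΘV r hr
  apply PBAux.unique_fact (u := φ (V 0))
  · intro w hw
    exact hGood w (hU1 w hw)
  · intro w hw
    obtain ⟨w0, hw0, rfl⟩ := List.mem_map.1 hw
    exact hGood _ (hMapsTo w0 (hV1 w0 hw0))
  · rw [hU2, PBAux.flatten_map_flatMap, hV2]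
    show substWord ζ (r.flatMap φ) = (r.flatMap η).flatMap φ
    unfold substWord
    rw [List.flatMap_assoc, List.flatMap_assoc]
    congr 1
    funext c
    exact (hcomm c).symm
end

section
/- For any ℓ ≥ 1, any complex numbers c₁, …, c_ℓ with |c_i| = 1 for all i, and any δ > 0, there exists a strictly increasing sequence of positive integers n₁ < n₂ < n₃ < … with n_j → ∞ and sup_j (n_{j+1} − n_j) < ∞, such that Σ_{i=1}^ℓ |1 − c_i^{n_j}| < δ for every j. -/
open Filter Topology

theorem exists_bounded_gap_pow_mem_nhds_one {G : Type*} [Group G] [TopologicalSpace G]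
    [IsTopologicalGroup G] [CompactSpace G] (x : G) {U : Set G} (hU : U ∈ 𝓝 1) :
    ∃ C : ℕ, ∀ m : ℕ, ∃ n, m < n ∧ n ≤ m + C ∧ x ^ n ∈ U := by
  -- Finitely many translates `interior U * x ^ k` cover the compact orbit closure.
  let W : ℕ → Set G := fun k => (· * (x ^ k)⁻¹) ⁻¹' interior U
  have hW_open : ∀ k, IsOpen (W k) := fun k => isOpen_interior.preimage (continuous_mul_const _)
  have hcover : closure (Set.range (x ^ ·)) ⊆ ⋃ k, W k := by
    intro y hy
    have hnhds : {z | y * z⁻¹ ∈ interior U} ∈ 𝓝 y :=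
      (continuous_const.mul continuous_inv).continuousAt.preimage_mem_nhds
        (by simpa using interior_mem_nhds.2 hU)
    obtain ⟨_, hz, k, rfl⟩ := mem_closure_iff_nhds.1 hy _ hnhds
    exact Set.mem_iUnion.2 ⟨k, hz⟩
  obtain ⟨t, ht⟩ := isClosed_closure.isCompact.elim_finite_subcover W hW_open hcover
  refine ⟨t.sup id + 1, fun m => ?_⟩
  obtain ⟨k, hkt, hk⟩ := Set.mem_iUnion₂.1 (ht (subset_closure ⟨m + (t.sup id + 1), rfl⟩))
  have hk_le : k ≤ t.sup id := Finset.le_sup (f := id) hkt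
  refine ⟨m + (t.sup id + 1) - k, by omega, by omega, interior_subset ?_⟩
  rwa [pow_sub _ (by omega)]

theorem exists_strictMono_of_bounded_gaps {p : ℕ → Prop} {C : ℕ}
    (h : ∀ m, ∃ n, m < n ∧ n ≤ m + C ∧ p n) :
    ∃ u : ℕ → ℕ, StrictMono u ∧ (∀ j, 0 < u j) ∧ (∀ j, u (j + 1) - u j ≤ C) ∧ ∀ j, p (u j) := by
  choose g hg_gt hg_le hg_p using h
  have hsucc : ∀ j, g^[j + 1] 0 = g (g^[j] 0) := fun j => Function.iterate_succ_apply' g j 0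
  refine ⟨fun j => g^[j + 1] 0, strictMono_nat_of_lt_succ fun j => ?_, fun j => ?_,
    fun j => ?_, fun j => ?_⟩
  · simpa only [hsucc (j + 1)] using hg_gt _
  · simpa only [hsucc j] using (Nat.zero_le _).trans_lt (hg_gt _)
  · simpa only [hsucc (j + 1), Nat.sub_le_iff_le_add'] using hg_le _
  · simpa only [hsucc j] using hg_p _

theorem exists_bounded_gap_sequence_of_near_returns_general
    (ℓ : ℕ) (c : Fin ℓ → ℂ) (hc : ∀ i, ‖c i‖ = 1)
    (δ : ℝ) (hδ : 0 < δ) :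
    ∃ n : ℕ → ℕ, StrictMono n ∧ (∀ j, 0 < n j) ∧
      Filter.Tendsto n Filter.atTop Filter.atTop ∧
      (∃ C : ℕ, ∀ j, n (j + 1) - n j ≤ C) ∧
      ∀ j, ∑ i : Fin ℓ, ‖1 - c i ^ n j‖ < δ := by
  let ζ : Fin ℓ → Circle := fun i => ⟨c i, mem_sphere_zero_iff_norm.2 (hc i)⟩
  have hU : {z : Fin ℓ → Circle | ∑ i, ‖1 - (z i : ℂ)‖ < δ} ∈ 𝓝 1 :=
    (isOpen_lt (by fun_prop) continuous_const).mem_nhds (by simpa using hδ)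
  obtain ⟨C, hC⟩ := exists_bounded_gap_pow_mem_nhds_one ζ hU
  obtain ⟨n, hmono, hpos, hgap, hnear⟩ := exists_strictMono_of_bounded_gaps hC
  exact ⟨n, hmono, hpos, hmono.tendsto_atTop, ⟨C, hgap⟩, hnear⟩

/-- For any `ℓ ≥ 1`, any complex numbers `c₁, …, c_ℓ` of modulus one, and any
`δ > 0`, there is a strictly increasing sequence of positive integers `n₁ < n₂ < …` tending to
infinity with bounded gaps, such that `Σ_{i} |1 − c_i^{n_j}| < δ` for every `j`. -/
theorem exists_bounded_gap_sequence_of_near_returns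
    (ℓ : ℕ) (hℓ : 1 ≤ ℓ) (c : Fin ℓ → ℂ) (hc : ∀ i, ‖c i‖ = 1)
    (δ : ℝ) (hδ : 0 < δ) :
    ∃ n : ℕ → ℕ, StrictMono n ∧ (∀ j, 0 < n j) ∧
      Filter.Tendsto n Filter.atTop Filter.atTop ∧
      (∃ C : ℕ, ∀ j, n (j + 1) - n j ≤ C) ∧
      ∀ j, ∑ i : Fin ℓ, ‖1 - c i ^ n j‖ < δ :=
  exists_bounded_gap_sequence_of_near_returns_general ℓ c hc δ hδ
end
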